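/- For every prime power q ≠ 2, 3, there exists a solvable group G of order |PSL₂(F_q)| such that Hol(PSL₂(F_q)) contains a regular subgroup isomorphic to G; equivalently, PSL₂(F_q) occurs as the additive group of a skew brace whose multiplicative group is solvable. -/

import Mathlib

/-- The right regular representation `ρ(γ) = (x ↦ xγ⁻¹)`. -/
def rho (Γ : Type*) [Group Γ] : Γ →* Equiv.Perm Γ :=
  MonoidHom.mk' (fun γ => Equiv.mulRight γ⁻¹)
    (by intro a b; ext x; simp [mul_assoc])

/-- The holomorph `Hol(Γ)`. -/
def Hol (Γ : Type*) [Group Γ] : Subgroup (Equiv.Perm Γ) :=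
  Subgroup.closure (Set.range (rho Γ) ∪ Set.range (MulAut.toPerm (M := Γ)))

/-- A subgroup of `Perm Γ` is regular if it acts transitively and freely on `Γ`. -/
def IsRegularSubgroup {Γ : Type*} [Group Γ] (Δ : Subgroup (Equiv.Perm Γ)) : Prop :=
  (∀ x y : Γ, ∃ δ ∈ Δ, δ x = y) ∧ ∀ δ ∈ Δ, δ ≠ 1 → ∀ x : Γ, δ x ≠ x

/-- `PSL₂(F) = SL₂(F)/Z`, the quotient by the center. -/
abbrev PSL2 (F : Type*) [Field F] :=
  Matrix.SpecialLinearGroup (Fin 2) F ⧸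
    Subgroup.center (Matrix.SpecialLinearGroup (Fin 2) F)

/-!
Let `C` be a `2 × 2` matrix over `F` without eigenvalues in `F`, `T ≤ GL₂(F)` its centraliser
(the non-split torus `F[C]ˣ`) and `B ≤ GL₂(F)` the upper triangular subgroup. Pairs
`(u, v) ∈ B × T` with `det u = det v` act on `PSL₂(F)` by
`x ↦ u x v⁻¹ = (u v⁻¹) · (v x v⁻¹)`, a left translation composed with an automorphism, so the
image lies in the holomorph.
The action is transitive: `T` acts simply transitively on the nonzero row vectors, so every
`s ∈ SL₂(F)` can be written `u v⁻¹`. The stabiliser of `1` acts trivially, since `B ∩ T`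
consists of scalars. The acting group embeds in `B × T`, which is solvable, hence so is its
image. A suitable `C` is the companion matrix of `X² - X - c` for any `c` outside the image of
`t ↦ t² + t`, which is not surjective on a finite field.
-/

open Matrix

section Holomorph

variable {Γ : Type*} [Group Γ]

theorem mulLeft_mem_Hol (g : Γ) : Equiv.mulLeft g ∈ Hol Γ := by
  have h : Equiv.mulLeft g = MulAut.toPerm (M := Γ) (MulAut.conj g) * rho Γ g⁻¹ := by
    ext x
    change g * x = g * (x * g⁻¹⁻¹) * g⁻¹
    group
  rw [h]
  exact mul_mem (Subgroup.subset_closure (Or.inr ⟨_, rfl⟩))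
    (Subgroup.subset_closure (Or.inl ⟨_, rfl⟩))

theorem toPerm_mem_Hol (σ : MulAut Γ) : MulAut.toPerm (M := Γ) σ ∈ Hol Γ :=
  Subgroup.subset_closure (Or.inr ⟨σ, rfl⟩)

theorem IsRegularSubgroup.of_transitive_of_free_at {Δ : Subgroup (Equiv.Perm Γ)}
    (x₀ : Γ) (htrans : ∀ y, ∃ δ ∈ Δ, δ x₀ = y) (hfree : ∀ δ ∈ Δ, δ x₀ = x₀ → δ = 1) :
    IsRegularSubgroup Δ := by
  refine ⟨fun y z => ?_, fun δ hδ hne x hx => hne ?_⟩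
  · obtain ⟨γ, hγ, rfl⟩ := htrans y
    obtain ⟨ε, hε, rfl⟩ := htrans z
    exact ⟨ε * γ⁻¹, mul_mem hε (inv_mem hγ), by simp⟩
  · obtain ⟨γ, hγ, rfl⟩ := htrans x
    have h : γ⁻¹ * δ * γ = 1 :=
      hfree _ (mul_mem (mul_mem (inv_mem hγ) hδ) hγ) (by simp [hx])
    rw [mul_assoc, inv_mul_eq_one] at h
    exact mul_eq_right.mp h.symm

end Holomorph

namespace Matrix.SpecialLinearGroup

variable {n R : Type*} [Fintype n] [DecidableEq n] [CommRing R]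

def ofGL (g : GL n R) (hg : GeneralLinearGroup.det g = 1) : SpecialLinearGroup n R :=
  ⟨g, by simpa [Units.ext_iff] using hg⟩

@[simp]
lemma toGL_ofGL (g : GL n R) (hg : GeneralLinearGroup.det g = 1) : toGL (ofGL g hg) = g :=
  Units.ext rfl

def conjGL (v : GL n R) : SpecialLinearGroup n R ≃* SpecialLinearGroup n R where
  toFun s := ofGL (v * toGL s * v⁻¹) (by simp)
  invFun s := ofGL (v⁻¹ * toGL s * v) (by simp)
  left_inv s := toGL_injective (by simp [mul_assoc])
  right_inv s := toGL_injective (by simp [mul_assoc])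
  map_mul' s t := toGL_injective (by simp [mul_assoc])

@[simp]
lemma toGL_conjGL (v : GL n R) (s : SpecialLinearGroup n R) :
    toGL (conjGL v s) = v * toGL s * v⁻¹ := by
  simp [conjGL]

end Matrix.SpecialLinearGroup

namespace Matrix.ProjectiveSpecialLinearGroup

open Matrix.SpecialLinearGroup ProjGenLinGroup

variable {n R : Type*} [Fintype n] [DecidableEq n] [CommRing R]

def conjGL (v : GL n R) : MulAut (ProjectiveSpecialLinearGroup n R) :=
  QuotientGroup.congr _ _ (SpecialLinearGroup.conjGL v)
    (Subgroup.characteristic_iff_map_eq.mp inferInstance _)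

lemma toPGL_conjGL (v : GL n R) (x : ProjectiveSpecialLinearGroup n R) :
    toPGL (conjGL v x) = mk v * toPGL x * (mk v)⁻¹ := by
  induction x using QuotientGroup.induction_on with | H s =>
  change toPGL (QuotientGroup.mk (SpecialLinearGroup.conjGL v s)) = _
  simp [mul_assoc]

variable (n R) in
def detEqPairs : Subgroup (GL n R × GL n R) :=
  (GeneralLinearGroup.det.comp (MonoidHom.fst _ _)).eqLocus
    (GeneralLinearGroup.det.comp (MonoidHom.snd _ _))

lemma mem_detEqPairs {p : GL n R × GL n R} :
    p ∈ detEqPairs n R ↔ GeneralLinearGroup.det p.1 = GeneralLinearGroup.det p.2 :=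
  Iff.rfl

lemma det_fst_mul_inv_snd (p : detEqPairs n R) :
    GeneralLinearGroup.det (p.1.1 * p.1.2⁻¹) = 1 := by
  rw [map_mul, map_inv, mul_inv_eq_one]
  exact p.2

def sandwichPerm (p : detEqPairs n R) : Equiv.Perm (ProjectiveSpecialLinearGroup n R) :=
  Equiv.mulLeft (ofGL _ (det_fst_mul_inv_snd p) : ProjectiveSpecialLinearGroup n R) *
    MulAut.toPerm (M := ProjectiveSpecialLinearGroup n R) (conjGL p.1.2)

lemma toPGL_sandwichPerm (p : detEqPairs n R) (x : ProjectiveSpecialLinearGroup n R) :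
    toPGL (sandwichPerm p x) = mk p.1.1 * toPGL x * (mk p.1.2)⁻¹ := by
  change toPGL ((ofGL _ (det_fst_mul_inv_snd p) : ProjectiveSpecialLinearGroup n R) *
    conjGL p.1.2 x) = _
  simp [toPGL_conjGL, mul_assoc]

theorem sandwichPerm_mem_Hol (p : detEqPairs n R) :
    sandwichPerm p ∈ Hol (ProjectiveSpecialLinearGroup n R) :=
  mul_mem (mulLeft_mem_Hol _) (toPerm_mem_Hol _)

def sandwichPermHom : detEqPairs n R →* Equiv.Perm (ProjectiveSpecialLinearGroup n R) where
  toFun := sandwichPerm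
  map_one' := Equiv.ext fun x => toPGL_injective (by simp [toPGL_sandwichPerm])
  map_mul' p q := Equiv.ext fun x => toPGL_injective (by simp [toPGL_sandwichPerm, mul_assoc])

end Matrix.ProjectiveSpecialLinearGroup

section TwoByTwo

open Matrix.ProjectiveSpecialLinearGroup ProjGenLinGroup

variable {F : Type*} [Field F]

local notation "M₂" => Matrix (Fin 2) (Fin 2) F

/-- The companion matrix of `X² - X - c`. It has an eigenvalue `-t ∈ F` iff `c = t * t + t`,
a criterion that also works in characteristic `2`. -/
def companion₂ (c : F) : M₂ := !![0, c; 1, 1]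

lemma det_smul_one_add_smul_companion₂ (c a b : F) :
    (a • 1 + b • companion₂ c).det = a * a + a * b - c * (b * b) := by
  simp [companion₂, det_fin_two, one_fin_two]; ring

lemma det_smul_one_add_smul_companion₂_ne_zero {c : F} (hc : ∀ t, t * t + t ≠ c) {a b : F}
    (hab : (a, b) ≠ 0) : (a • 1 + b • companion₂ c).det ≠ 0 := by
  rw [det_smul_one_add_smul_companion₂]
  rcases eq_or_ne b 0 with rfl | hb
  · simpa using hab
  · intro h
    apply hc (a / b)
    field_simp
    linear_combination h

lemma eq_smul_one_add_smul_companion₂ {c : F} {A : M₂}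
    (h : Commute A (companion₂ c)) : A = A 0 0 • 1 + A 1 0 • companion₂ c := by
  have h00 : A 0 1 = A 1 0 * c := by
    simpa [companion₂, mul_apply, Fin.sum_univ_two, mul_comm] using congrFun₂ h.eq 0 0
  have h10 : A 1 1 = A 0 0 + A 1 0 := by
    simpa [companion₂, mul_apply, Fin.sum_univ_two] using congrFun₂ h.eq 1 0
  ext i j
  fin_cases i <;> fin_cases j <;> simp [companion₂, h00, h10]

lemma Commute.of_commute_companion₂ {c : F} {A B : M₂}
    (hA : Commute A (companion₂ c)) (hB : Commute B (companion₂ c)) : Commute A B := by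
  rw [eq_smul_one_add_smul_companion₂ hB]
  exact ((Commute.one_right A).smul_right _).add_right (hA.smul_right _)

def upperTriangular₂ : Subgroup (GL (Fin 2) F) where
  carrier := {u | (u : M₂) 1 0 = 0}
  one_mem' := by simp
  mul_mem' {u v} hu hv := by
    simp_all [mul_apply, Fin.sum_univ_two]
  inv_mem' {u} hu := by
    simp_all [coe_units_inv, inv_def, adjugate_fin_two]

def centralizerCompanion₂ (c : F) : Subgroup (GL (Fin 2) F) where
  carrier := {v | Commute (v : M₂) (companion₂ c)}
  one_mem' := Commute.one_left _
  mul_mem' hv hw := hv.mul_left hw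
  inv_mem' hv := Commute.units_inv_left hv

instance (c : F) : Group.IsSolvable (centralizerCompanion₂ c) :=
  Group.isSolvable_of_comm fun v w => Subtype.ext <| Units.ext (v.2.of_commute_companion₂ w.2).eq

def upperTriangular₂Diag : upperTriangular₂ (F := F) →* F × F where
  toFun u := ((u.1 : M₂) 0 0, (u.1 : M₂) 1 1)
  map_one' := by simp
  map_mul' u v := by
    have hu : (u.1 : M₂) 1 0 = 0 := u.2
    have hv : (v.1 : M₂) 1 0 = 0 := v.2
    simp [mul_apply, Fin.sum_univ_two, hu, hv]

lemma commute_of_upperTriangular₂Diag_eq_one {u v : upperTriangular₂ (F := F)}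
    (hu : upperTriangular₂Diag u = 1) (hv : upperTriangular₂Diag v = 1) : u * v = v * u := by
  have hu₁₀ : (u.1 : M₂) 1 0 = 0 := u.2
  have hv₁₀ : (v.1 : M₂) 1 0 = 0 := v.2
  simp only [upperTriangular₂Diag, MonoidHom.coe_mk, OneHom.coe_mk, Prod.mk_eq_one] at hu hv
  refine Subtype.ext <| Units.ext ?_
  ext i j
  fin_cases i <;> fin_cases j <;>
    simp [mul_apply, Fin.sum_univ_two, hu, hv, hu₁₀, hv₁₀, add_comm]

instance : Group.IsSolvable (upperTriangular₂ (F := F)) := by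
  let f := upperTriangular₂Diag (F := F)
  have : Group.IsSolvable f.toHomUnits.ker := Group.isSolvable_of_comm fun u v => Subtype.ext <|
    commute_of_upperTriangular₂Diag_eq_one (by simpa [Units.ext_iff] using u.2)
      (by simpa [Units.ext_iff] using v.2)
  exact Group.isSolvable_of_ker_le_range f.toHomUnits.ker.subtype f.toHomUnits (by simp)

lemma center_le_upperTriangular₂ : Subgroup.center (GL (Fin 2) F) ≤ upperTriangular₂ := by
  rw [GeneralLinearGroup.center_eq_range_scalar]
  rintro _ ⟨a, rfl⟩
  simp [upperTriangular₂]

lemma mem_center_of_mem_upperTriangular₂ {c : F} {v : GL (Fin 2) F}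
    (hv : v ∈ upperTriangular₂) (hv' : v ∈ centralizerCompanion₂ c) :
    v ∈ Subgroup.center (GL (Fin 2) F) := by
  have hscalar := eq_smul_one_add_smul_companion₂ hv'
  rw [show (v : M₂) 1 0 = 0 from hv, zero_smul, add_zero] at hscalar
  refine Subgroup.mem_center_iff.mpr fun g => Units.ext ?_
  simp only [Units.val_mul]
  rw [hscalar, mul_smul_one, smul_one_mul]

def borelTorus (c : F) : Subgroup (GL (Fin 2) F × GL (Fin 2) F) :=
  detEqPairs (Fin 2) F ⊓ upperTriangular₂.prod (centralizerCompanion₂ c)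

instance (c : F) : Group.IsSolvable (borelTorus c) :=
  Group.isSolvable_of_isSolvable_injective (f := (Subgroup.prodEquiv _ _).toMonoidHom.comp
    (Subgroup.inclusion inf_le_right)) ((Subgroup.prodEquiv _ _).injective.comp
      (Subgroup.inclusion_injective _))

def borelTorusPermHom (c : F) : borelTorus c →* Equiv.Perm (PSL2 F) :=
  sandwichPermHom.comp (Subgroup.inclusion inf_le_left)

lemma toPGL_borelTorusPermHom {c : F} (p : borelTorus c) (x : PSL2 F) :
    toPGL (borelTorusPermHom c p x) = mk p.1.1 * toPGL x * (mk p.1.2)⁻¹ :=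
  toPGL_sandwichPerm _ x

lemma exists_borelTorusPermHom_apply_one_eq {c : F} (hc : ∀ t, t * t + t ≠ c) (x : PSL2 F) :
    ∃ p, borelTorusPermHom c p 1 = x := by
  induction x using QuotientGroup.induction_on with | H s =>
  have hrow : (s 1 1, -s 1 0) ≠ 0 := by
    intro h
    apply SpecialLinearGroup.row_ne_zero s 1
    ext j
    fin_cases j <;> simp_all [Prod.ext_iff]
  set v := GeneralLinearGroup.mkOfDetNeZero _ (det_smul_one_add_smul_companion₂_ne_zero hc hrow)
  set u := SpecialLinearGroup.toGL s * v
  refine ⟨⟨(u, v), ?_, ?_, ?_⟩, toPGL_injective ?_⟩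
  · simp [mem_detEqPairs, u]
  · simp [upperTriangular₂, u, v, mul_apply, companion₂, Fin.sum_univ_two]
    ring
  · exact ((Commute.one_left _).smul_left _).add_left ((Commute.refl _).smul_left _)
  · simp [toPGL_borelTorusPermHom, u]

lemma borelTorusPermHom_eq_one_of_apply_one {c : F} (p : borelTorus c)
    (h : borelTorusPermHom c p 1 = 1) : borelTorusPermHom c p = 1 := by
  obtain ⟨-, hu, hv⟩ := p.2
  have huv : p.1.1 * p.1.2⁻¹ ∈ Subgroup.center (GL (Fin 2) F) := by
    have h' := congrArg toPGL h
    rwa [toPGL_borelTorusPermHom, map_one, mul_one, ← map_inv, ← map_mul, mk_eq_one] at h'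
  have hv_center : p.1.2 ∈ Subgroup.center (GL (Fin 2) F) := by
    refine mem_center_of_mem_upperTriangular₂ ?_ hv
    simpa using mul_mem (inv_mem (center_le_upperTriangular₂ huv)) hu
  have hu_center : p.1.1 ∈ Subgroup.center (GL (Fin 2) F) := by
    simpa using mul_mem huv hv_center
  refine Equiv.ext fun x => toPGL_injective ?_
  simp [toPGL_borelTorusPermHom, mk_eq_one.mpr hu_center, mk_eq_one.mpr hv_center]

end TwoByTwo

lemma exists_forall_mul_self_add_ne (F : Type*) [Field F] [Finite F] :
    ∃ c : F, ∀ t, t * t + t ≠ c := by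
  have hni : ¬Function.Injective (fun t : F => t * t + t) := fun h => by
    simpa using h (a₁ := 0) (a₂ := -1) (by ring)
  simpa [Function.Surjective] using mt Finite.injective_iff_surjective.mpr hni

theorem stmt19_general {F : Type*} [Field F] [Fintype F] :
    ∃ Δ : Subgroup (Equiv.Perm (PSL2 F)),
      Δ ≤ Hol (PSL2 F) ∧ IsRegularSubgroup Δ ∧ IsSolvable Δ := by
  obtain ⟨c, hc⟩ := exists_forall_mul_self_add_ne F
  refine ⟨(borelTorusPermHom c).range, ?_, IsRegularSubgroup.of_transitive_of_free_at 1 ?_ ?_,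
    Group.isSolvable_of_surjective (borelTorusPermHom c).rangeRestrict_surjective⟩
  · rintro _ ⟨p, rfl⟩
    exact Matrix.ProjectiveSpecialLinearGroup.sandwichPerm_mem_Hol _
  · intro x
    obtain ⟨p, hp⟩ := exists_borelTorusPermHom_apply_one_eq hc x
    exact ⟨_, ⟨p, rfl⟩, hp⟩
  · rintro _ ⟨p, rfl⟩
    exact borelTorusPermHom_eq_one_of_apply_one p

/-- For every prime power `q ≠ 2, 3`, there is a solvable group `G` of order
`|PSL₂(F_q)|` such that `Hol(PSL₂(F_q))` contains a regular subgroup isomorphic to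
`G`: that is, `Hol(PSL₂(F_q))` contains a solvable regular subgroup. -/
theorem stmt19 {F : Type*} [Field F] [Fintype F]
    (hq2 : Fintype.card F ≠ 2) (hq3 : Fintype.card F ≠ 3) :
    ∃ Δ : Subgroup (Equiv.Perm (PSL2 F)),
      Δ ≤ Hol (PSL2 F) ∧ IsRegularSubgroup Δ ∧ IsSolvable Δ :=
  stmt19_general
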